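/- Let A ∈ ℝ^{n×n}, B ∈ ℝ^{n×m}, C ∈ ℝ^{p×n}, E ∈ ℝ^{n×r} with rank(E) = r, and let U_p ∈ ℝ^{m×N}, D_p ∈ ℝ^{r×N}, X_p, X_f ∈ ℝ^{n×N}, Y_p, Y_f ∈ ℝ^{p×N} satisfy X_f = A·X_p + B·U_p + E·D_p, Y_p = C·X_p and Y_f = C·X_f, with the stacked (m+r+n)×N matrix [U_p; D_p; X_p] of full row rank m+r+n. Suppose there exist matrices T₁ ∈ ℝ^{n×m}, T₂ ∈ ℝ^{n×p}, T₃ ∈ ℝ^{n×n}, T₄ ∈ ℝ^{n×p} with T₃ nilpotent and C·T₁ of full column rank m, such that X_f = T₁·U_p + T₂·Y_p + T₃·X_p + T₄·Y_f. Then for every nonzero z ∈ ℂ the complex (n+p)×(n+r) block matrix [[z·I_n − A, −E],[C, 0]] has rank n + r, and [C·B C·E] has rank m + r. -/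

import Mathlib

/-!
Full row rank of the data `[U_p; D_p; X_p]` lets one compare coefficients in the data equation,
which gives `B = T₁ + T₄CB`, `E = T₄CE` and `A = T₂C + T₃ + T₄CA`. If `(x, d)` is in the kernel
of the Rosenbrock matrix at `z`, then `Cx = 0` and `Ax = zx - Ed`, so these identities give
`T₃x = zx`; as `T₃` is nilpotent and `z ≠ 0`, `x = 0`, and then `d = 0` since `E` is injective.
Likewise, `CBu + CEw = 0` gives `CT₁u = CBu + CEw = 0`, so `u = 0`, and then `Ew = T₄CEw = 0`.
-/

open Matrix

namespace Matrix

variable {K : Type*} [Field K] {l m n : Type*} [Fintype n]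

theorem rank_eq_card_iff_forall_mulVec_eq_zero (M : Matrix m n K) :
    M.rank = Fintype.card n ↔ ∀ v, M *ᵥ v = 0 → v = 0 := by
  have h := LinearMap.finrank_range_add_finrank_ker M.mulVecLin
  rw [Module.finrank_fintype_fun_eq_card] at h
  rw [← ker_mulVecLin_eq_bot_iff, Matrix.rank, ← Submodule.finrank_eq_zero]
  omega

theorem exists_mul_eq_one_of_rank_eq_card [Fintype m] [DecidableEq m] [DecidableEq n]
    {M : Matrix m n K} (h : M.rank = Fintype.card n) : ∃ N : Matrix n m K, N * M = 1 := by
  obtain ⟨g, hg⟩ := M.mulVecLin.exists_leftInverse_of_injective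
    (ker_mulVecLin_eq_bot_iff.2 ((rank_eq_card_iff_forall_mulVec_eq_zero M).1 h))
  refine ⟨LinearMap.toMatrix' g, toLin'.injective ?_⟩
  rw [toLin'_mul, toLin'_toMatrix', toLin'_one]
  exact hg

theorem rank_map_eq_card_of_rank_eq_card [Fintype m] {L : Type*} [Field L] (f : K →+* L)
    {M : Matrix m n K} (h : M.rank = Fintype.card n) : (M.map f).rank = Fintype.card n := by
  classical
  obtain ⟨N, hN⟩ := exists_mul_eq_one_of_rank_eq_card h
  have hNf : N.map f * M.map f = 1 := by
    rw [← Matrix.map_mul, hN, Matrix.map_one f (map_zero f) (map_one f)]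
  refine (rank_eq_card_iff_forall_mulVec_eq_zero _).2 fun v hv => ?_
  simpa [hNf] using congrArg (N.map f *ᵥ ·) hv

theorem eq_of_mul_eq_mul_of_rank_eq_card [Fintype m] {S : Matrix m n K}
    (hS : S.rank = Fintype.card m) {M M' : Matrix l m K} (h : M * S = M' * S) : M = M' := by
  have hSt := (rank_eq_card_iff_forall_mulVec_eq_zero Sᵀ).1 (by rwa [rank_transpose])
  funext i
  rw [← sub_eq_zero]
  refine hSt _ ?_
  rw [mulVec_sub, mulVec_transpose, mulVec_transpose]
  exact sub_eq_zero.2 (congrFun h i)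

open Module.End in
theorem eq_zero_of_mulVec_eq_smul_of_isNilpotent [DecidableEq n] {T : Matrix n n K}
    (hT : IsNilpotent T) {z : K} (hz : z ≠ 0) {x : n → K} (hx : T *ᵥ x = z • x) : x = 0 := by
  by_contra hx0
  have hz' : HasEigenvalue (toLinAlgEquiv' T) z := hasEigenvalue_of_hasEigenvector
    (hasEigenvector_iff.2 ⟨mem_eigenspace_iff.2 (by rwa [toLinAlgEquiv'_apply]), hx0⟩)
  exact hz (hz'.isNilpotent_of_isNilpotent (hT.map toLinAlgEquiv')).eq_zero

end Matrix

section DataDrivenControl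

variable {K : Type*} [Field K] {n m p r N : Type*} [Fintype n] [Fintype m] [Fintype p]
  [Fintype r] [Fintype N]

theorem model_eq_of_data_eq {A : Matrix n n K} {B : Matrix n m K} {C : Matrix p n K}
    {E : Matrix n r K} {U_p : Matrix m N K} {D_p : Matrix r N K} {X_p X_f : Matrix n N K}
    {Y_p Y_f : Matrix p N K} {T₁ : Matrix n m K} {T₂ : Matrix n p K} {T₃ : Matrix n n K}
    {T₄ : Matrix n p K} (hdata : X_f = A * X_p + B * U_p + E * D_p)
    (hYp : Y_p = C * X_p) (hYf : Y_f = C * X_f)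
    (hFRR : (fromRows U_p (fromRows D_p X_p)).rank = Fintype.card (m ⊕ r ⊕ n))
    (hsol : X_f = T₁ * U_p + T₂ * Y_p + T₃ * X_p + T₄ * Y_f) :
    B = T₁ + T₄ * (C * B) ∧ E = T₄ * (C * E) ∧ A = T₂ * C + T₃ + T₄ * (C * A) := by
  have h : fromCols B (fromCols E A) * fromRows U_p (fromRows D_p X_p) =
      fromCols (T₁ + T₄ * (C * B)) (fromCols (T₄ * (C * E)) (T₂ * C + T₃ + T₄ * (C * A))) *
        fromRows U_p (fromRows D_p X_p) := by
    subst hYp hYf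
    rw [hdata] at hsol
    simp only [fromCols_mul_fromRows, Matrix.add_mul, Matrix.mul_add, Matrix.mul_assoc] at hsol ⊢
    rw [← sub_eq_zero] at hsol ⊢
    rw [← hsol]
    abel
  simpa only [fromCols_ext_iff] using eq_of_mul_eq_mul_of_rank_eq_card hFRR h

theorem rank_fromBlocks_smul_one_sub_eq_card_of_isNilpotent [DecidableEq n]
    {A : Matrix n n K} {C : Matrix p n K} {E : Matrix n r K} {T₂ : Matrix n p K}
    {T₃ : Matrix n n K} {T₄ : Matrix n p K} (hE : E.rank = Fintype.card r)
    (hEC : E = T₄ * (C * E)) (hA : A = T₂ * C + T₃ + T₄ * (C * A)) (hT₃ : IsNilpotent T₃)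
    {z : K} (hz : z ≠ 0) :
    (fromBlocks (z • 1 - A) (-E) C 0).rank = Fintype.card n + Fintype.card r := by
  rw [← Fintype.card_sum, rank_eq_card_iff_forall_mulVec_eq_zero]
  intro v hv
  obtain ⟨x, d, rfl⟩ : ∃ x d, v = Sum.elim x d := ⟨_, _, (Sum.elim_comp_inl_inr v).symm⟩
  rw [fromBlocks_mulVec, ← Sum.elim_zero_zero, Sum.elim_eq_iff] at hv
  obtain ⟨hpencil, hCx⟩ := hv
  simp only [Sum.elim_comp_inl, Sum.elim_comp_inr, zero_mulVec, add_zero, sub_mulVec,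
    smul_mulVec, one_mulVec, neg_mulVec] at hpencil hCx
  have hAx : A *ᵥ x = z • x - E *ᵥ d := by linear_combination (norm := module) -hpencil
  have hT₃x : T₃ *ᵥ x = z • x := by
    have h := congrArg (· *ᵥ x) hA
    simp only [add_mulVec, ← mulVec_mulVec, hCx, mulVec_zero, zero_add, hAx, mulVec_sub,
      mulVec_smul, smul_zero, zero_sub, mulVec_neg] at h
    rw [mulVec_mulVec, mulVec_mulVec, Matrix.mul_assoc, ← hEC] at h
    linear_combination (norm := module) -h
  have hx : x = 0 := eq_zero_of_mulVec_eq_smul_of_isNilpotent hT₃ hz hT₃x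
  have hd : d = 0 := by
    refine (rank_eq_card_iff_forall_mulVec_eq_zero E).1 hE d ?_
    simpa [hx] using hpencil
  rw [hx, hd, Sum.elim_zero_zero]

theorem rank_fromCols_mul_eq_card {B : Matrix n m K} {C : Matrix p n K} {E : Matrix n r K}
    {T₁ : Matrix n m K} {T₄ : Matrix n p K} (hE : E.rank = Fintype.card r)
    (hCT₁ : (C * T₁).rank = Fintype.card m) (hB : B = T₁ + T₄ * (C * B))
    (hEC : E = T₄ * (C * E)) :
    (fromCols (C * B) (C * E)).rank = Fintype.card m + Fintype.card r := by
  rw [← Fintype.card_sum, rank_eq_card_iff_forall_mulVec_eq_zero]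
  intro v hv
  obtain ⟨u, w, rfl⟩ : ∃ u w, v = Sum.elim u w := ⟨_, _, (Sum.elim_comp_inl_inr v).symm⟩
  rw [fromCols_mulVec_sumElim] at hv
  have hCT₁u : (C * T₁) *ᵥ u = 0 := by
    have hCE : C * T₄ * (C * E) = C * E := by rw [Matrix.mul_assoc, ← hEC]
    have h : (C * B) *ᵥ u = (C * T₁) *ᵥ u + (C * T₄) *ᵥ ((C * B) *ᵥ u) := by
      conv_lhs => rw [hB]
      rw [mulVec_mulVec, Matrix.mul_add, add_mulVec, Matrix.mul_assoc]
    rw [eq_neg_of_add_eq_zero_left hv, mulVec_neg, mulVec_mulVec, hCE] at h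
    linear_combination (norm := module) -h
  have hu : u = 0 := (rank_eq_card_iff_forall_mulVec_eq_zero _).1 hCT₁ u hCT₁u
  have hw : w = 0 := by
    refine (rank_eq_card_iff_forall_mulVec_eq_zero E).1 hE w ?_
    rw [hEC, ← mulVec_mulVec, ← mulVec_mulVec]
    simpa [hu] using congrArg (T₄ *ᵥ ·) hv
  rw [hu, hw, Sum.elim_zero_zero]

end DataDrivenControl

/-- Existence of a solution (T₁, T₂, T₃, T₄) of the data equation with T₃ nilpotent
and C·T₁ of full column rank implies the model-based solvability conditions. -/
theorem stmt_11 {n m p r N : ℕ}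
    (A : Matrix (Fin n) (Fin n) ℝ) (B : Matrix (Fin n) (Fin m) ℝ)
    (C : Matrix (Fin p) (Fin n) ℝ) (E : Matrix (Fin n) (Fin r) ℝ)
    (hE : E.rank = r)
    (U_p : Matrix (Fin m) (Fin N) ℝ) (D_p : Matrix (Fin r) (Fin N) ℝ)
    (X_p X_f : Matrix (Fin n) (Fin N) ℝ) (Y_p Y_f : Matrix (Fin p) (Fin N) ℝ)
    (hdata : X_f = A * X_p + B * U_p + E * D_p)
    (hYp : Y_p = C * X_p) (hYf : Y_f = C * X_f)
    (hFRR : (Matrix.fromRows U_p (Matrix.fromRows D_p X_p)).rank = m + r + n)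
    (T₁ : Matrix (Fin n) (Fin m) ℝ) (T₂ : Matrix (Fin n) (Fin p) ℝ)
    (T₃ : Matrix (Fin n) (Fin n) ℝ) (T₄ : Matrix (Fin n) (Fin p) ℝ)
    (hT₃ : IsNilpotent T₃) (hCT₁ : (C * T₁).rank = m)
    (hsol : X_f = T₁ * U_p + T₂ * Y_p + T₃ * X_p + T₄ * Y_f) :
    (∀ z : ℂ, z ≠ 0 →
        (Matrix.fromBlocks
            (z • (1 : Matrix (Fin n) (Fin n) ℂ) - A.map (algebraMap ℝ ℂ))
            (-(E.map (algebraMap ℝ ℂ)))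
            (C.map (algebraMap ℝ ℂ)) 0).rank = n + r) ∧
      (Matrix.fromCols (C * B) (C * E)).rank = m + r := by
  obtain ⟨hB, hEC, hA⟩ :=
    model_eq_of_data_eq hdata hYp hYf (by simpa [add_assoc] using hFRR) hsol
  have hEr : E.rank = Fintype.card (Fin r) := by simpa using hE
  refine ⟨fun z hz => ?_,
    by simpa using rank_fromCols_mul_eq_card hEr (by simpa using hCT₁) hB hEC⟩
  set f := algebraMap ℝ ℂ
  have hECf : E.map f = T₄.map f * (C.map f * E.map f) := by
    simpa only [Matrix.map_mul] using congrArg (·.map f) hEC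
  have hAf : A.map f = T₂.map f * C.map f + T₃.map f + T₄.map f * (C.map f * A.map f) := by
    simpa only [Matrix.map_mul, Matrix.map_add _ (map_add f)] using congrArg (·.map f) hA
  simpa using rank_fromBlocks_smul_one_sub_eq_card_of_isNilpotent
    (rank_map_eq_card_of_rank_eq_card f hEr) hECf hAf (hT₃.map f.mapMatrix) hz
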